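/- arXiv:1807.06095 — 3 statements merged into one kernel-verified Lean document; each statement's English description precedes it below -/
import Mathlib

section
/- The canonical transformation defined by ωx = 2Q + √(2ωΦ) sin φ, ωy = ωq + 2√(2ωΦ) cos φ, X = −ωq − √(2ωΦ) cos φ, Y = −Q − √(2ωΦ) sin φ maps the planar Hill problem quadratic Hamiltonian H₀ = (1/2)(X+ωy)² + (1/2)(Y−ωx)² − (3/2)ω²x² to K₀ = ωΦ − (3/2)Q². -/
open Real

theorem hill_complete_reduction
    (ω Φ q Q φ x y X Y : ℝ) (hω : 0 < ω) (hΦ : 0 < Φ)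
    (hx : ω * x = 2 * Q + Real.sqrt (2 * ω * Φ) * Real.sin φ)
    (hy : ω * y = ω * q + 2 * Real.sqrt (2 * ω * Φ) * Real.cos φ)
    (hX : X = -(ω * q) - Real.sqrt (2 * ω * Φ) * Real.cos φ)
    (hY : Y = -Q - Real.sqrt (2 * ω * Φ) * Real.sin φ) :
    (1/2) * (X + ω * y)^2 + (1/2) * (Y - ω * x)^2 - (3/2) * ω^2 * x^2
      = ω * Φ - (3/2) * Q^2 := by
  have hs : Real.sqrt (2 * ω * Φ) ^ 2 = 2 * ω * Φ :=
    Real.sq_sqrt (by positivity)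
  have hA : X + ω * y = Real.sqrt (2 * ω * Φ) * Real.cos φ := by
    rw [hX, hy]; ring
  have hB : Y - ω * x = -(3 * Q) - 2 * Real.sqrt (2 * ω * Φ) * Real.sin φ := by
    rw [hY, hx]; ring
  have hx2 : ω ^ 2 * x ^ 2 = (2 * Q + Real.sqrt (2 * ω * Φ) * Real.sin φ) ^ 2 := by
    rw [← hx]; ring
  rw [hA, hB]
  have hpyth := Real.sin_sq_add_cos_sq φ
  nlinarith [hs, hpyth, hx2]
end

section
/- The second-order coefficient in the expansion 1/ρ = Σ_{n≥0} S_n/Δ^{2n+1} (with σ of order ε², χ of order ε, Δ² = 1+3cos²φ) is S₂ = −(7/2)σ sin φ − (3/2)σ sin 3φ + 7χ² + 9χ² cos 2φ; equivalently, the order-ε² part of the Taylor expansion of (Δ² + 4σ sin φ + 8χ cos φ + 4σ² + 4χ²)^{−1/2} equals S₂/Δ⁵ with this S₂. -/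
/-! The radicand is the quartic Δ² + aε + bε² + cε⁴ with a = 8χ cos φ, b = 4σ sin φ + 4χ².
Since (g^{-1/2})'' = (3g'² - 2g g'')/(4 g^{5/2}), its ε²-coefficient is (3a² - 4Δ²b)/(8Δ⁵), and
with Δ² = 1 + 3cos²φ and the double- and triple-angle formulas the numerator is S₂. -/

open Real Filter Topology

theorem hasDerivAt_one_div_sqrt {g : ℝ → ℝ} {g' x : ℝ} (hg : HasDerivAt g g' x) (hx : 0 < g x) :
    HasDerivAt (fun y => 1 / √(g y)) (-g' / (2 * √(g x) ^ 3)) x := by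
  have hs : √(g x) ≠ 0 := (sqrt_pos.mpr hx).ne'
  simp only [one_div]
  refine ((hg.sqrt hx.ne').inv hs).congr_deriv ?_
  field_simp

theorem iteratedDeriv_two_one_div_sqrt {g g' : ℝ → ℝ} {g'' x₀ : ℝ}
    (hg : ∀ᶠ x in 𝓝 x₀, HasDerivAt g (g' x) x) (hg' : HasDerivAt g' g'' x₀)
    (hpos : 0 < g x₀) :
    iteratedDeriv 2 (fun x => 1 / √(g x)) x₀
      = (3 * g' x₀ ^ 2 - 2 * g x₀ * g'') / (4 * √(g x₀) ^ 5) := by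
  have hderiv : deriv (fun x => 1 / √(g x)) =ᶠ[𝓝 x₀] fun x => -g' x / (2 * √(g x) ^ 3) := by
    filter_upwards [hg, hg.self_of_nhds.continuousAt.eventually (lt_mem_nhds hpos)]
      with x hgx hx using (hasDerivAt_one_div_sqrt hgx hx).deriv
  have hs : 0 < √(g x₀) := sqrt_pos.mpr hpos
  have hsq : √(g x₀) ^ 2 = g x₀ := sq_sqrt hpos.le
  have hquot := hg'.fun_neg.fun_div
    (((hg.self_of_nhds.sqrt hpos.ne').fun_pow 3).const_mul 2) (by positivity)
  rw [iteratedDeriv_succ, iteratedDeriv_one, hderiv.deriv_eq, hquot.deriv]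
  generalize √(g x₀) = s at hs hsq ⊢
  rw [← hsq]
  field_simp
  ring

theorem iteratedDeriv_two_one_div_sqrt_quartic (p a b c : ℝ) (hp : 0 < p) :
    iteratedDeriv 2 (fun ε => 1 / √(p + a * ε + b * ε ^ 2 + c * ε ^ 4)) 0
      = (3 * a ^ 2 - 4 * p * b) / (4 * √p ^ 5) := by
  have hg (ε : ℝ) : HasDerivAt (fun ε => p + a * ε + b * ε ^ 2 + c * ε ^ 4)
      (a + 2 * b * ε + 4 * c * ε ^ 3) ε := by
    refine ((((hasDerivAt_id ε).const_mul a).const_add p).add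
      ((hasDerivAt_pow 2 ε).const_mul b) |>.add ((hasDerivAt_pow 4 ε).const_mul c)).congr_deriv ?_
    push_cast
    ring
  have hg' : HasDerivAt (fun ε => a + 2 * b * ε + 4 * c * ε ^ 3) (2 * b) 0 := by
    refine ((((hasDerivAt_id (0 : ℝ)).const_mul (2 * b)).const_add a).add
      ((hasDerivAt_pow 3 0).const_mul (4 * c))).congr_deriv ?_
    simp
  rw [iteratedDeriv_two_one_div_sqrt (.of_forall hg) hg' (by simpa using hp)]
  simp only [mul_zero, add_zero, ne_eq, OfNat.ofNat_ne_zero, not_false_eq_true, zero_pow]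
  ring

theorem second_order_numerator (φ σ χ : ℝ) :
    24 * χ ^ 2 * cos φ ^ 2 - 2 * (1 + 3 * cos φ ^ 2) * (σ * sin φ + χ ^ 2)
      = -(7/2) * σ * sin φ - (3/2) * σ * sin (3 * φ) + 7 * χ^2 + 9 * χ^2 * cos (2 * φ) := by
  rw [sin_three_mul, cos_two_mul]
  linear_combination -6 * σ * sin φ * sin_sq_add_cos_sq φ

theorem second_order_coefficient_S2 (φ σ χ : ℝ) (Δ : ℝ)
    (hΔ : Δ = Real.sqrt (1 + 3 * Real.cos φ ^ 2)) :
    iteratedDeriv 2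
      (fun ε : ℝ => 1 / Real.sqrt (Δ^2 + 4 * (ε^2 * σ) * Real.sin φ
          + 8 * (ε * χ) * Real.cos φ + 4 * (ε^2 * σ)^2 + 4 * (ε * χ)^2))
      0 / 2
      = (-(7/2) * σ * Real.sin φ - (3/2) * σ * Real.sin (3 * φ)
          + 7 * χ^2 + 9 * χ^2 * Real.cos (2 * φ)) / Δ^5 := by
  have hΔpos : 0 < Δ := hΔ ▸ sqrt_pos.mpr (by positivity)
  have hΔsq : Δ ^ 2 = 1 + 3 * cos φ ^ 2 := hΔ ▸ sq_sqrt (by positivity)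
  have hradicand (ε : ℝ) : Δ^2 + 4 * (ε^2 * σ) * sin φ + 8 * (ε * χ) * cos φ
      + 4 * (ε^2 * σ)^2 + 4 * (ε * χ)^2 = Δ ^ 2 + (8 * χ * cos φ) * ε
      + (4 * σ * sin φ + 4 * χ ^ 2) * ε ^ 2 + (4 * σ ^ 2) * ε ^ 4 := by
    ring
  simp only [hradicand]
  rw [iteratedDeriv_two_one_div_sqrt_quartic _ _ _ _ (by positivity),
    sqrt_sq hΔpos.le, ← second_order_numerator, ← hΔsq]
  field_simp
  ring
end

section
/- With K̃ = K(3/4)/π and Ẽ = E(3/4)/π, the coefficients b₃ = (2/3)u and b₄ = (1/9)(11K̃ − 14Ẽ)/(K̃−Ẽ)·u, where u = Ω²/ω² > 0, are strictly positive; in particular 11K(3/4) > 14E(3/4). -/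
open Real MeasureTheory

set_option maxHeartbeats 1000000

theorem b3_b4_positive
    (u : ℝ) (hu : 0 < u)
    (K34 E34 Ktil Etil b₃ b₄ : ℝ)
    (hK : K34 = ∫ θ in (0:ℝ)..(π / 2), 1 / Real.sqrt (1 - (3/4) * Real.sin θ ^ 2))
    (hE : E34 = ∫ θ in (0:ℝ)..(π / 2), Real.sqrt (1 - (3/4) * Real.sin θ ^ 2))
    (hKt : Ktil = K34 / π) (hEt : Etil = E34 / π)
    (hb3 : b₃ = 2/3 * u)
    (hb4 : b₄ = 1/9 * (11 * Ktil - 14 * Etil) / (Ktil - Etil) * u) :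
    0 < b₃ ∧ 0 < b₄ ∧ 11 * K34 > 14 * E34 := by
  have hpi : (0:ℝ) < π := Real.pi_pos
  have hple : (0:ℝ) ≤ π / 2 := by linarith
  -- basic pointwise facts
  have harg : ∀ θ : ℝ, (1/4 : ℝ) ≤ 1 - (3/4) * Real.sin θ ^ 2 := by
    intro θ
    nlinarith [Real.sin_sq_le_one θ]
  have harg1 : ∀ θ : ℝ, 1 - (3/4) * Real.sin θ ^ 2 ≤ 1 := by
    intro θ
    nlinarith [sq_nonneg (Real.sin θ)]
  -- continuity
  have hcontK : Continuous fun θ : ℝ => 1 / Real.sqrt (1 - (3/4) * Real.sin θ ^ 2) := by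
    apply Continuous.div continuous_const
    · exact (Real.continuous_sqrt.comp (by continuity))
    · intro θ
      have := harg θ
      positivity
  have hcontE : Continuous fun θ : ℝ => Real.sqrt (1 - (3/4) * Real.sin θ ^ 2) :=
    Real.continuous_sqrt.comp (by continuity)
  -- E34 ≤ π/2
  have hEle : E34 ≤ π / 2 := by
    rw [hE]
    calc (∫ θ in (0:ℝ)..(π / 2), Real.sqrt (1 - (3/4) * Real.sin θ ^ 2))
        ≤ ∫ _θ in (0:ℝ)..(π / 2), (1:ℝ) := by
          apply intervalIntegral.integral_mono_on hple
            (hcontE.intervalIntegrable _ _) (intervalIntegrable_const)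
          intro θ _
          exact Real.sqrt_le_one.mpr (harg1 θ)
      _ = π / 2 := by simp
  -- lower bound for K34 via truncated series
  have hcontP : Continuous fun θ : ℝ => 1 + (3/8) * Real.sin θ ^ 2 + (27/128) * Real.sin θ ^ 4 + (135/1024) * Real.sin θ ^ 6 := by fun_prop
  have c2 : Continuous fun θ : ℝ => (3/8 : ℝ) * Real.sin θ ^ 2 := by fun_prop
  have c4 : Continuous fun θ : ℝ => (27/128 : ℝ) * Real.sin θ ^ 4 := by fun_prop
  have c6 : Continuous fun θ : ℝ => (135/1024 : ℝ) * Real.sin θ ^ 6 := by fun_prop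
  have hKge : 21427/32768 * π ≤ K34 := by
    have hpoint : ∀ θ ∈ Set.Icc (0:ℝ) (π/2),
        1 + (3/8) * Real.sin θ ^ 2 + (27/128) * Real.sin θ ^ 4 + (135/1024) * Real.sin θ ^ 6
          ≤ 1 / Real.sqrt (1 - (3/4) * Real.sin θ ^ 2) := by
      intro θ _
      set s := Real.sin θ with hs
      have h1 : (1/4 : ℝ) ≤ 1 - (3/4) * s ^ 2 := harg θ
      have hsq : Real.sqrt (1 - (3/4) * s ^ 2) ^ 2 = 1 - (3/4) * s ^ 2 :=
        Real.sq_sqrt (by linarith)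
      have hpos : 0 < Real.sqrt (1 - (3/4) * s ^ 2) :=
        Real.sqrt_pos.mpr (by linarith)
      rw [le_div_iff₀ hpos]
      have hp : (0:ℝ) ≤ 1 + (3/8) * s ^ 2 + (27/128) * s ^ 4 + (135/1024) * s ^ 6 := by
        positivity
      nlinarith [sq_nonneg ((1 + (3/8) * s ^ 2 + (27/128) * s ^ 4 + (135/1024) * s ^ 6) * Real.sqrt (1 - (3/4) * s ^ 2) - 1),
        mul_nonneg hp hpos.le, sq_nonneg s, pow_nonneg (sq_nonneg s) 2,
        pow_nonneg (sq_nonneg s) 3, pow_nonneg (sq_nonneg s) 4,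
        pow_nonneg (sq_nonneg s) 5, pow_nonneg (sq_nonneg s) 6,
        pow_nonneg (sq_nonneg s) 7, hsq]
    have hintle : (∫ θ in (0:ℝ)..(π / 2),
        (1 + (3/8) * Real.sin θ ^ 2 + (27/128) * Real.sin θ ^ 4 + (135/1024) * Real.sin θ ^ 6))
        ≤ K34 := by
      rw [hK]
      apply intervalIntegral.integral_mono_on hple (hcontP.intervalIntegrable _ _)
        (hcontK.intervalIntegrable _ _) hpoint
    -- compute the polynomial integral
    have i0 : (∫ _θ in (0:ℝ)..(π / 2), (1:ℝ)) = π / 2 := by simp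
    have i2 : (∫ θ in (0:ℝ)..(π / 2), Real.sin θ ^ 2) = π / 4 := by
      rw [integral_sin_sq]
      simp
      ring
    have i4 : (∫ θ in (0:ℝ)..(π / 2), Real.sin θ ^ 4) = 3 * π / 16 := by
      have := @integral_sin_pow 0 (π/2) 2
      rw [i2] at this
      simpa using by rw [this]; simp; ring
    have i6 : (∫ θ in (0:ℝ)..(π / 2), Real.sin θ ^ 6) = 15 * π / 96 := by
      have := @integral_sin_pow 0 (π/2) 4
      rw [i4] at this
      simpa using by rw [this]; simp; ring
    have hsum : (∫ θ in (0:ℝ)..(π / 2),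
        (1 + (3/8) * Real.sin θ ^ 2 + (27/128) * Real.sin θ ^ 4 + (135/1024) * Real.sin θ ^ 6))
        = 21427/32768 * π := by
      rw [intervalIntegral.integral_add (by
            exact ((continuous_const.add c2).add c4).intervalIntegrable _ _)
          (c6.intervalIntegrable _ _),
        intervalIntegral.integral_add (by
            exact (continuous_const.add c2).intervalIntegrable _ _)
          (c4.intervalIntegrable _ _),
        intervalIntegral.integral_add (intervalIntegrable_const)
          (c2.intervalIntegrable _ _),
        intervalIntegral.integral_const_mul, intervalIntegral.integral_const_mul,
        intervalIntegral.integral_const_mul, i2, i4, i6]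
      simp
      ring
    linarith [hintle, hsum.symm.le]
  -- conclude
  have hmain : 11 * K34 > 14 * E34 := by nlinarith
  have hKE : E34 < K34 := by nlinarith
  refine ⟨by rw [hb3]; positivity, ?_, hmain⟩
  rw [hb4, hKt, hEt]
  have h1 : 0 < 11 * (K34 / π) - 14 * (E34 / π) := by
    have : 0 < (11 * K34 - 14 * E34) / π := div_pos (by linarith) hpi
    calc (0:ℝ) < (11 * K34 - 14 * E34) / π := this
      _ = 11 * (K34 / π) - 14 * (E34 / π) := by ring
  have h2 : 0 < K34 / π - E34 / π := by
    have : 0 < (K34 - E34) / π := div_pos (by linarith) hpi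
    calc (0:ℝ) < (K34 - E34) / π := this
      _ = K34 / π - E34 / π := by ring
  positivity
end
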